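/- Let X be a zero-mean random vector in R^d with covariance matrix Σ satisfying the L4-L2 moment equivalence with constant κ. Then for every unit vector v ∈ S^{d−1}, E (vᵀ Off(X⊗X) v)² ≤ 2 κ⁴ ‖Σ‖², where ‖·‖ is the operator norm. -/

import Mathlib

open MeasureTheory ProbabilityTheory Real
open scoped ENNReal NNReal

noncomputable section

/-- The diagonal part of a matrix: off-diagonal entries set to zero. -/
def diagPart {d : ℕ} (M : Matrix (Fin d) (Fin d) ℝ) : Matrix (Fin d) (Fin d) ℝ :=
  Matrix.of fun i j => if i = j then M i j else 0

/-- The off-diagonal part of a matrix. -/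
def offPart {d : ℕ} (M : Matrix (Fin d) (Fin d) ℝ) : Matrix (Fin d) (Fin d) ℝ :=
  M - diagPart M

/-- Outer product `x xᵀ`. -/
def outer {d : ℕ} (x : Fin d → ℝ) : Matrix (Fin d) (Fin d) ℝ :=
  Matrix.of fun i j => x i * x j

/-- Bilinear form `uᵀ M w`. -/
def bilinForm {d : ℕ} (M : Matrix (Fin d) (Fin d) ℝ) (u w : Fin d → ℝ) : ℝ :=
  ∑ i, ∑ j, u i * M i j * w j

/-- Quadratic form `vᵀ M v`. -/
def quadForm {d : ℕ} (M : Matrix (Fin d) (Fin d) ℝ) (v : Fin d → ℝ) : ℝ :=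
  bilinForm M v v

/-- Operator (spectral) norm of a matrix acting on Euclidean space. -/
def opNorm {d : ℕ} (M : Matrix (Fin d) (Fin d) ℝ) : ℝ :=
  ‖LinearMap.toContinuousLinearMap (Matrix.toEuclideanLin M)‖

/-- Effective rank `tr Σ / ‖Σ‖`. -/
def effRank {d : ℕ} (S : Matrix (Fin d) (Fin d) ℝ) : ℝ :=
  S.trace / opNorm S

/-- The unit sphere `S^{d-1}` in `ℝ^d`. -/
def unitSphere (d : ℕ) : Set (Fin d → ℝ) := {v | ∑ i, (v i) ^ 2 = 1}

/-- The truncation function: `ψ(x) = x` on `[-1,1]` and `ψ(x) = sign x` for `|x| > 1`. -/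
def psi (x : ℝ) : ℝ := max (-1) (min 1 x)

variable {Ω : Type*} [MeasureSpace Ω]

/-- `X` has zero mean (coordinatewise integrable with zero integral). -/
def ZeroMean {d : ℕ} (X : Ω → Fin d → ℝ) : Prop :=
  ∀ i, Integrable (fun ω => X ω i) ∧ ∫ ω, X ω i = 0

/-- `S` is the covariance matrix of the (zero-mean) random vector `X`. -/
def IsCov {d : ℕ} (X : Ω → Fin d → ℝ) (S : Matrix (Fin d) (Fin d) ℝ) : Prop :=
  ∀ i j, S i j = ∫ ω, X ω i * X ω j

/-- All fourth moments of the coordinates of `X` are finite. -/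
def FiniteFourthMoments {d : ℕ} (X : Ω → Fin d → ℝ) : Prop :=
  ∀ i j k l : Fin d, Integrable (fun ω => X ω i * X ω j * X ω k * X ω l)

/-- The `L₄-L₂` moment equivalence (hypercontractivity) with constant `κ`:
for every unit vector `v`, `(E|⟨X,v⟩|⁴)^{1/4} ≤ κ (E|⟨X,v⟩|²)^{1/2}`. -/
def L4L2 {d : ℕ} (X : Ω → Fin d → ℝ) (κ : ℝ) : Prop :=
  ∀ v ∈ unitSphere d,
    (∫ ω, |∑ i, X ω i * v i| ^ 4) ^ ((1 : ℝ)/4) ≤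
      κ * (∫ ω, |∑ i, X ω i * v i| ^ 2) ^ ((1 : ℝ)/2)

/-- `ε : Ω → Fin d → ℝ` is a vector of i.i.d. Bernoulli(p) {0,1}-valued random variables. -/
def IsBernoulliMask {d : ℕ} (p : ℝ) (ε : Ω → Fin d → ℝ) : Prop :=
  (∀ ω i, ε ω i = 0 ∨ ε ω i = 1) ∧
  (∀ i, Measurable fun ω => ε ω i) ∧
  (∀ i, (ℙ : Measure Ω) {ω | ε ω i = 1} = ENNReal.ofReal p) ∧
  iIndepFun (fun i ω => ε ω i) ℙ

/-- `Y = X ⊙ p`: the `p`-sparsification of `X` by the Bernoulli mask `ε`,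
with `ε` independent of `X`. -/
def IsSparsified {d : ℕ} (p : ℝ) (X ε Y : Ω → Fin d → ℝ) : Prop :=
  IsBernoulliMask p ε ∧ Measurable X ∧ IndepFun X ε ∧ ∀ ω i, Y ω i = X ω i * ε ω i

/-- `Y 0, ..., Y (N-1)` are i.i.d. copies of the `p`-sparsification of `X`. -/
def IsIIDSparsifiedSample {d N : ℕ} (p : ℝ) (X : Ω → Fin d → ℝ)
    (Y : Fin N → Ω → Fin d → ℝ) : Prop :=
  (∀ j, Measurable (Y j)) ∧
  iIndepFun Y ℙ ∧
  ∃ ε Y₀, Measurable Y₀ ∧ IsSparsified p X ε Y₀ ∧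
    ∀ j, Measure.map (Y j) ℙ = Measure.map Y₀ ℙ

/-- `θ` is a Gaussian vector with mean `m` and covariance `σ2 • I` (independent
Gaussian coordinates). -/
def IsGaussianVecIndep {d : ℕ} (m : Fin d → ℝ) (σ2 : ℝ≥0) (θ : Ω → Fin d → ℝ) : Prop :=
  (∀ i, Measurable fun ω => θ ω i) ∧
  (∀ i, Measure.map (fun ω => θ ω i) ℙ = gaussianReal (m i) σ2) ∧
  iIndepFun (fun i ω => θ ω i) ℙ

/-- `G` is a centered Gaussian vector with covariance matrix `S`: every linear marginal
`⟨G, v⟩` is a real Gaussian with mean `0` and variance `vᵀ S v`. -/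
def IsCenteredGaussianVector {d : ℕ} (S : Matrix (Fin d) (Fin d) ℝ) (G : Ω → Fin d → ℝ) : Prop :=
  Measurable G ∧
  ∀ v : Fin d → ℝ, Measure.map (fun ω => ∑ i, G ω i * v i) ℙ =
    gaussianReal 0 (quadForm S v).toNNReal

end

/-!
Pointwise, `vᵀ Off(x xᵀ) v = ⟨x, v⟩² - ∑ᵢ vᵢ² xᵢ²`, and `(a - b)² ≤ a² + b²` for `a, b ≥ 0`.
The L₄-L₂ equivalence bounds `E ⟨X, v⟩⁴` by `κ⁴ (vᵀ Σ v)² ≤ κ⁴ ‖Σ‖²`. Jensen's inequality for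
the weights `vᵢ²` bounds `E (∑ᵢ vᵢ² Xᵢ²)²` by `∑ᵢ vᵢ² E Xᵢ⁴`, and the L₄-L₂ equivalence in the
coordinate directions gives `E Xᵢ⁴ ≤ κ⁴ Σᵢᵢ² ≤ κ⁴ ‖Σ‖²`.
-/

open scoped Matrix

lemma le_pow_four_mul_sq_of_rpow_le {A B κ : ℝ} (hA : 0 ≤ A) (hB : 0 ≤ B)
    (h : A ^ ((1 : ℝ) / 4) ≤ κ * B ^ ((1 : ℝ) / 2)) : A ≤ κ ^ 4 * B ^ 2 := by
  have h' : A ^ ((1 : ℝ) / 4) ≤ |κ| * B ^ ((1 : ℝ) / 2) :=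
    h.trans (mul_le_mul_of_nonneg_right (le_abs_self κ) (by positivity))
  calc A = (A ^ ((1 : ℝ) / 4)) ^ 4 := by
        rw [← Real.rpow_natCast, ← Real.rpow_mul hA]; norm_num
    _ ≤ (|κ| * B ^ ((1 : ℝ) / 2)) ^ 4 := by gcongr
    _ = κ ^ 4 * B ^ 2 := by
        rw [mul_pow, ← Real.rpow_natCast (B ^ _), ← Real.rpow_mul hB, pow_abs,
          abs_of_nonneg (by positivity)]
        norm_num

lemma sq_sq_sub_le {a b : ℝ} (hb : 0 ≤ b) : (a ^ 2 - b) ^ 2 ≤ a ^ 4 + b ^ 2 := by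
  nlinarith [mul_nonneg (sq_nonneg a) hb]

lemma sq_sum_mul_le_of_sum_sq_eq_one {ι : Type*} (s : Finset ι) {v : ι → ℝ}
    (hv : ∑ i ∈ s, v i ^ 2 = 1) (y : ι → ℝ) :
    (∑ i ∈ s, v i ^ 2 * y i) ^ 2 ≤ ∑ i ∈ s, v i ^ 2 * y i ^ 2 := by
  simpa [hv] using Finset.sum_sq_le_sum_mul_sum_of_sq_le_mul s (fun i _ => sq_nonneg (v i))
    (fun i _ => by positivity : ∀ i ∈ s, 0 ≤ v i ^ 2 * y i ^ 2) (fun i _ => le_of_eq (by ring))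

section MatrixForms

variable {d : ℕ}

lemma sq_sum_mul_eq (x v : Fin d → ℝ) :
    (∑ i, x i * v i) ^ 2 = ∑ i, ∑ j, v i * v j * (x i * x j) := by
  rw [sq, Finset.sum_mul_sum]
  exact Finset.sum_congr rfl fun i _ => Finset.sum_congr rfl fun j _ => by ring

lemma quadForm_offPart_outer (x v : Fin d → ℝ) :
    quadForm (offPart (outer x)) v = (∑ i, x i * v i) ^ 2 - ∑ i, v i ^ 2 * x i ^ 2 := by
  simp only [quadForm, bilinForm, offPart, diagPart, outer, Matrix.sub_apply, Matrix.of_apply,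
    mul_sub, sub_mul, Finset.sum_sub_distrib, sq_sum_mul_eq, mul_ite, ite_mul, mul_zero, zero_mul,
    Finset.sum_ite_eq, Finset.mem_univ, if_true]
  congr 1
  · exact Finset.sum_congr rfl fun i _ => Finset.sum_congr rfl fun j _ => by ring
  · exact Finset.sum_congr rfl fun i _ => by ring

lemma quadForm_eq_dotProduct (S : Matrix (Fin d) (Fin d) ℝ) (v : Fin d → ℝ) :
    quadForm S v = v ⬝ᵥ S *ᵥ v := by
  simp only [quadForm, bilinForm, dotProduct, Matrix.mulVec, Finset.mul_sum, mul_assoc]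

lemma single_mem_unitSphere (i : Fin d) : Pi.single i 1 ∈ unitSphere d := by
  simp [unitSphere, Pi.single_apply]

lemma quadForm_le_opNorm (S : Matrix (Fin d) (Fin d) ℝ) {v : Fin d → ℝ}
    (hv : v ∈ unitSphere d) : quadForm S v ≤ opNorm S := by
  set T := LinearMap.toContinuousLinearMap (Matrix.toEuclideanLin S)
  have hnorm : ‖WithLp.toLp 2 v‖ = 1 := by
    simp [EuclideanSpace.norm_eq, show ∑ i, v i ^ 2 = 1 from hv]
  calc quadForm S v = inner ℝ (WithLp.toLp 2 v) (T (WithLp.toLp 2 v)) := by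
        rw [quadForm_eq_dotProduct, real_inner_comm]; rfl
    _ ≤ ‖WithLp.toLp 2 v‖ * ‖T (WithLp.toLp 2 v)‖ := real_inner_le_norm _ _
    _ ≤ ‖WithLp.toLp 2 v‖ * (‖T‖ * ‖WithLp.toLp 2 v‖) := by gcongr; exact T.le_opNorm _
    _ = opNorm S := by rw [hnorm, one_mul, mul_one]; rfl

end MatrixForms

section Moments

variable {Ω : Type*} [MeasureSpace Ω] {d : ℕ} {X : Ω → Fin d → ℝ}

lemma FiniteFourthMoments.memLp_two_mul (hXm : Measurable X) (hmom : FiniteFourthMoments X)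
    (i j : Fin d) : MemLp (fun ω => X ω i * X ω j) 2 := by
  have hmeas : Measurable fun ω => X ω i * X ω j :=
    ((measurable_pi_apply i).comp hXm).mul ((measurable_pi_apply j).comp hXm)
  rw [memLp_two_iff_integrable_sq hmeas.aestronglyMeasurable]
  simpa only [mul_pow, sq, ← mul_assoc] using (hmom i i j j).congr
    (Filter.Eventually.of_forall fun ω => by ring)

lemma FiniteFourthMoments.memLp_two_sq_sum_mul (hXm : Measurable X)
    (hmom : FiniteFourthMoments X) (v : Fin d → ℝ) :
    MemLp (fun ω => (∑ i, X ω i * v i) ^ 2) 2 := by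
  simp_rw [sq_sum_mul_eq]
  exact memLp_finsetSum _ fun i _ => memLp_finsetSum _ fun j _ =>
    (hmom.memLp_two_mul hXm i j).const_mul _

lemma FiniteFourthMoments.memLp_two_sum_mul_sq (hXm : Measurable X)
    (hmom : FiniteFourthMoments X) (w : Fin d → ℝ) :
    MemLp (fun ω => ∑ i, w i * X ω i ^ 2) 2 := by
  simp_rw [sq]
  exact memLp_finsetSum _ fun i _ => (hmom.memLp_two_mul hXm i i).const_mul _

lemma IsCov.integral_sq_sum_mul [IsFiniteMeasure (ℙ : Measure Ω)] {S : Matrix (Fin d) (Fin d) ℝ}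
    (hcov : IsCov X S) (hXm : Measurable X) (hmom : FiniteFourthMoments X) (v : Fin d → ℝ) :
    ∫ ω, (∑ i, X ω i * v i) ^ 2 = quadForm S v := by
  have hint i j : Integrable (fun ω => v i * v j * (X ω i * X ω j)) :=
    ((hmom.memLp_two_mul hXm i j).integrable one_le_two).const_mul _
  simp_rw [sq_sum_mul_eq]
  rw [integral_finsetSum _ fun i _ => integrable_finsetSum _ fun j _ => hint i j]
  simp_rw [integral_finsetSum _ fun j _ => hint _ j, integral_const_mul]
  simp only [quadForm, bilinForm]
  exact Finset.sum_congr rfl fun i _ => Finset.sum_congr rfl fun j _ => by rw [hcov]; ring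

lemma L4L2.integral_pow_four_le {κ : ℝ} (hL : L4L2 X κ) {v : Fin d → ℝ}
    (hv : v ∈ unitSphere d) :
    ∫ ω, (∑ i, X ω i * v i) ^ 4 ≤ κ ^ 4 * (∫ ω, (∑ i, X ω i * v i) ^ 2) ^ 2 := by
  have h := hL v hv
  simp only [sq_abs, Even.pow_abs (by decide : Even 4)] at h
  exact le_pow_four_mul_sq_of_rpow_le (integral_nonneg fun ω => by positivity)
    (integral_nonneg fun ω => by positivity) h

lemma integral_pow_four_sum_mul_le [IsFiniteMeasure (ℙ : Measure Ω)]
    {S : Matrix (Fin d) (Fin d) ℝ} {κ : ℝ} (hXm : Measurable X) (hcov : IsCov X S)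
    (hmom : FiniteFourthMoments X) (hL : L4L2 X κ) {v : Fin d → ℝ} (hv : v ∈ unitSphere d) :
    ∫ ω, (∑ i, X ω i * v i) ^ 4 ≤ κ ^ 4 * opNorm S ^ 2 := by
  have hvar := hcov.integral_sq_sum_mul hXm hmom v
  have hvar_nonneg : 0 ≤ quadForm S v := hvar ▸ integral_nonneg fun ω => sq_nonneg _
  calc ∫ ω, (∑ i, X ω i * v i) ^ 4 ≤ κ ^ 4 * quadForm S v ^ 2 := hvar ▸ hL.integral_pow_four_le hv
    _ ≤ κ ^ 4 * opNorm S ^ 2 := by gcongr; exact quadForm_le_opNorm S hv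

lemma integral_apply_pow_four_le [IsFiniteMeasure (ℙ : Measure Ω)]
    {S : Matrix (Fin d) (Fin d) ℝ} {κ : ℝ} (hXm : Measurable X) (hcov : IsCov X S)
    (hmom : FiniteFourthMoments X) (hL : L4L2 X κ) (i : Fin d) :
    ∫ ω, X ω i ^ 4 ≤ κ ^ 4 * opNorm S ^ 2 := by
  simpa [Pi.single_apply] using
    integral_pow_four_sum_mul_le hXm hcov hmom hL (single_mem_unitSphere i)

lemma integral_sq_sum_sq_mul_le [IsFiniteMeasure (ℙ : Measure Ω)]
    {S : Matrix (Fin d) (Fin d) ℝ} {κ : ℝ} (hXm : Measurable X) (hcov : IsCov X S)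
    (hmom : FiniteFourthMoments X) (hL : L4L2 X κ) {v : Fin d → ℝ} (hv : v ∈ unitSphere d) :
    ∫ ω, (∑ i, v i ^ 2 * X ω i ^ 2) ^ 2 ≤ κ ^ 4 * opNorm S ^ 2 := by
  have hv' : ∑ i, v i ^ 2 = 1 := hv
  have hint i : Integrable (fun ω => v i ^ 2 * X ω i ^ 4) :=
    ((hmom i i i i).const_mul (v i ^ 2)).congr (Filter.Eventually.of_forall fun ω => by ring)
  calc ∫ ω, (∑ i, v i ^ 2 * X ω i ^ 2) ^ 2
      ≤ ∫ ω, ∑ i, v i ^ 2 * X ω i ^ 4 := by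
        refine integral_mono (hmom.memLp_two_sum_mul_sq hXm _).integrable_sq
          (integrable_finsetSum _ fun i _ => hint i) fun ω => ?_
        exact (sq_sum_mul_le_of_sum_sq_eq_one _ hv' fun i => X ω i ^ 2).trans_eq
          (Finset.sum_congr rfl fun i _ => by ring)
    _ = ∑ i, v i ^ 2 * ∫ ω, X ω i ^ 4 := by
        rw [integral_finsetSum _ fun i _ => hint i]
        simp_rw [integral_const_mul]
    _ ≤ ∑ i, v i ^ 2 * (κ ^ 4 * opNorm S ^ 2) := by
        gcongr with i; exact integral_apply_pow_four_le hXm hcov hmom hL i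
    _ = κ ^ 4 * opNorm S ^ 2 := by rw [← Finset.sum_mul, hv', one_mul]

end Moments

theorem statement_12_general {Ω : Type*} [MeasureSpace Ω] [IsProbabilityMeasure (ℙ : Measure Ω)]
    {d : ℕ} (X : Ω → Fin d → ℝ) (S : Matrix (Fin d) (Fin d) ℝ) (κ : ℝ)
    (hXm : Measurable X) (hcov : IsCov X S)
    (hmom : FiniteFourthMoments X) (hL : L4L2 X κ) :
    ∀ v ∈ unitSphere d,
      (∫ ω, (quadForm (offPart (outer (X ω))) v) ^ 2) ≤ 2 * κ ^ 4 * (opNorm S) ^ 2 := by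
  intro v hv
  have hZ4 : Integrable fun ω => (∑ i, X ω i * v i) ^ 4 := by
    simpa only [← pow_mul] using (hmom.memLp_two_sq_sum_mul hXm v).integrable_sq
  have hg2 := (hmom.memLp_two_sum_mul_sq hXm fun i => v i ^ 2).integrable_sq
  calc ∫ ω, (quadForm (offPart (outer (X ω))) v) ^ 2
      ≤ ∫ ω, ((∑ i, X ω i * v i) ^ 4 + (∑ i, v i ^ 2 * X ω i ^ 2) ^ 2) := by
        refine integral_mono_of_nonneg (Filter.Eventually.of_forall fun ω => sq_nonneg _)
          (hZ4.add hg2) (Filter.Eventually.of_forall fun ω => ?_)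
        simp only [quadForm_offPart_outer]
        exact sq_sq_sub_le (by positivity)
    _ = (∫ ω, (∑ i, X ω i * v i) ^ 4) + ∫ ω, (∑ i, v i ^ 2 * X ω i ^ 2) ^ 2 :=
        integral_add hZ4 hg2
    _ ≤ κ ^ 4 * opNorm S ^ 2 + κ ^ 4 * opNorm S ^ 2 := add_le_add
        (integral_pow_four_sum_mul_le hXm hcov hmom hL hv)
        (integral_sq_sum_sq_mul_le hXm hcov hmom hL hv)
    _ = 2 * κ ^ 4 * opNorm S ^ 2 := by ring

/-- If `X` is zero-mean with covariance `Σ` satisfying `L₄-L₂` with constant `κ`,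
then for every unit vector `v`, `E (vᵀ Off(X⊗X) v)² ≤ 2 κ⁴ ‖Σ‖²`. -/
theorem statement_12 {Ω : Type*} [MeasureSpace Ω] [IsProbabilityMeasure (ℙ : Measure Ω)]
    {d : ℕ} (X : Ω → Fin d → ℝ) (S : Matrix (Fin d) (Fin d) ℝ) (κ : ℝ)
    (hXm : Measurable X) (hmean : ZeroMean X) (hcov : IsCov X S)
    (hmom : FiniteFourthMoments X) (hκ : 1 ≤ κ) (hL : L4L2 X κ) :
    ∀ v ∈ unitSphere d,
      (∫ ω, (quadForm (offPart (outer (X ω))) v) ^ 2) ≤ 2 * κ ^ 4 * (opNorm S) ^ 2 :=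
  statement_12_general X S κ hXm hcov hmom hL
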